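/- Suppose the type-compatibility relation ⊑ is the most conservative one, i.e., every type is compatible with every type (∀ τ, τ' ∈ T, τ ⊑ τ'). Then the type-aware rule system Γ_Ty derives exactly the same points-to facts as the inclusion-based rule system Γ_I up to type erasure: for every program P, register or abstract object x, and allocation site H, Γ_I ⊢_P x ↦ H if and only if there exists a type T such that Γ_Ty ⊢_P x ↦^T H (with each typed abstract object H^T identified with its underlying untyped object H). -/
import Mathlib


/-! ## Syntax of the simple LLVM-like language -/

/-- Structure fields: each allocation has exactly two fields `a` and `b`. -/
inductive Fld | a | b
deriving DecidableEq

/-- Base (scalar) types: `BT ::= int | float | char`. -/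
inductive BTy | int | float | char
deriving DecidableEq

/-- All types: `T ::= BT ∪ PT` where `PT ::= BT* | BT**`. -/
inductive Ty | base (b : BTy) | ptr1 (b : BTy) | ptr2 (b : BTy)
deriving DecidableEq

/-- Pointer types: `PT ::= BT* | BT**`. -/
inductive PTy | ptr1 (b : BTy) | ptr2 (b : BTy)
deriving DecidableEq

/-- The type read/written through a pointer of the given pointer type:
`load T* p` accesses type `T`. -/
def PTy.pointee : PTy → Ty
  | .ptr1 b => .base b
  | .ptr2 b => .ptr1 b

abbrev Reg := ℕ
abbrev FnName := ℕ
abbrev Site := ℕ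

/-- Instructions of the simple language. -/
inductive Instr
  | alloc (site : Site) (r : Reg)
  | cast (r : Reg) (t : Ty) (p : Reg)
  | load (r : Reg) (t : PTy) (p : Reg)
  | store (r : Reg) (t : PTy) (p : Reg)
  | gep (r : Reg) (t : PTy) (p : Reg) (f : Fld)

/-- A function: a name and an unordered bag of instructions (represented as a
list; no rule uses the order). -/
structure Func where
  name : FnName
  body : List Instr

/-- A program is a finite set (bag) of functions. -/
abbrev Program := List Func

/-- Abstract objects, identified by their allocation site: one abstract object
per field of each `alloc` instruction. -/
inductive Obj
  | allocSite (i : Site) (f : Fld)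
deriving DecidableEq

/-- A node of a points-to graph: a register or an (untyped) abstract object. -/
inductive Node
  | reg (r : Reg)
  | obj (o : Obj)
deriving DecidableEq

/-- A node of a type-aware points-to graph: a register, or a typed abstract
object `H^T` (an allocation-site object replicated once per type tag `T`). -/
inductive TNode
  | reg (r : Reg)
  | obj (o : Obj) (t : Ty)
deriving DecidableEq

/-- The type erasure of a typed node: each typed abstract object `H^T` is
identified with its underlying untyped object `H`. -/
def TNode.erase : TNode → Node
  | .reg r => .reg r
  | .obj o _ => .obj o

/-- `InstrIn P ins`: instruction `ins` occurs in program `P`. -/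
def InstrIn (P : Program) (ins : Instr) : Prop :=
  ∃ fn ∈ P, ins ∈ fn.body

/-! ## The inclusion-based rules `Γ_I` and the type-aware rules `Γ_Ty` -/

/-- `DerivesI P x H` formalizes `Γ_I ⊢_P x ↦ H`: derivability of the fact
`x ↦ H` by exhaustive application of the inclusion-based rules
`Γ_I = {Alloc, Cast, Load, Store}` to the program `P`. -/
inductive DerivesI (P : Program) : Node → Obj → Prop
  /-- Alloc: `i: r = alloc()` gives `r ↦ H_i` (pointer to the first field). -/
  | rAlloc {i : Site} {r : Reg} :
      InstrIn P (.alloc i r) →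
      DerivesI P (.reg r) (.allocSite i .a)
  /-- Cast: `r = cast PT, p` and `p ↦ H` give `r ↦ H`. -/
  | rCast {r : Reg} {t : Ty} {p : Reg} {H : Obj} :
      InstrIn P (.cast r t p) →
      DerivesI P (.reg p) H →
      DerivesI P (.reg r) H
  /-- Load: `r = load PT p`, `p ↦ H`, `H ↦ I` give `r ↦ I`. -/
  | rLoad {r : Reg} {t : PTy} {p : Reg} {H I : Obj} :
      InstrIn P (.load r t p) →
      DerivesI P (.reg p) H → DerivesI P (.obj H) I →
      DerivesI P (.reg r) I
  /-- Store: `store r, PT p`, `p ↦ I`, `r ↦ H` give `I ↦ H`. -/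
  | rStore {r : Reg} {t : PTy} {p : Reg} {H I : Obj} :
      InstrIn P (.store r t p) →
      DerivesI P (.reg p) I → DerivesI P (.reg r) H →
      DerivesI P (.obj I) H

/-- `DerivesTy P compat x T H` formalizes `Γ_Ty ⊢_P x ↦^T H`: derivability of
the typed fact `x ↦^T H` (`x` may point to abstract object `H` with type tag
`T`) by exhaustive application of the type-aware rules `Γ_Ty` with respect to
the type-compatibility relation `compat` (written `⊑`). -/
inductive DerivesTy (P : Program) (compat : Ty → Ty → Prop) :
    TNode → Ty → Obj → Prop
  /-- Alloc: `i: r = alloc()` gives `r ↦^char H_i`. -/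
  | rAlloc {i : Site} {r : Reg} :
      InstrIn P (.alloc i r) →
      DerivesTy P compat (.reg r) (.base .char) (.allocSite i .a)
  /-- Cast (as before, ignoring types): `r = cast PT, p` and `p ↦^X H` give
  `r ↦^X H`. -/
  | rCast {r : Reg} {t : Ty} {p : Reg} {X : Ty} {H : Obj} :
      InstrIn P (.cast r t p) →
      DerivesTy P compat (.reg p) X H →
      DerivesTy P compat (.reg r) X H
  /-- Load: `r = load T* p`, `p ↦^U H`, `T ⊑ U`, `H ↦^X I` give `r ↦^X I`. -/
  | rLoad {r : Reg} {t : PTy} {p : Reg} {U X : Ty} {H I : Obj} :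
      InstrIn P (.load r t p) →
      DerivesTy P compat (.reg p) U H → compat t.pointee U →
      DerivesTy P compat (.obj H U) X I →
      DerivesTy P compat (.reg r) X I
  /-- Store: `store r, T* p`, `p ↦^U H`, `U ⊑ T`, `r ↦^X I` give `H ↦^X I`. -/
  | rStore {r : Reg} {t : PTy} {p : Reg} {U X : Ty} {H I : Obj} :
      InstrIn P (.store r t p) →
      DerivesTy P compat (.reg p) U H → compat U t.pointee →
      DerivesTy P compat (.reg r) X I →
      DerivesTy P compat (.obj H U) X I

/-- Tag a node with `char` everywhere. -/
def Node.tagChar : Node → TNode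
  | .reg r => .reg r
  | .obj o => .obj o (.base .char)

lemma fwd_char {P : Program} {x : Node} {H : Obj} (h : DerivesI P x H) :
    DerivesTy P (fun _ _ => True) x.tagChar (.base .char) H := by
  induction h with
  | rAlloc h => exact .rAlloc h
  | rCast h _ ih => exact .rCast h ih
  | rLoad h _ _ ihp ihH => exact .rLoad h ihp trivial ihH
  | rStore h _ _ ihp ihr => exact .rStore h ihp trivial ihr

lemma bwd {P : Program} {c : Ty → Ty → Prop} {tx : TNode} {T : Ty} {H : Obj}
    (h : DerivesTy P c tx T H) : DerivesI P tx.erase H := by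
  induction h with
  | rAlloc h => exact .rAlloc h
  | rCast h _ ih => exact .rCast h ih
  | rLoad h _ _ _ ihp ihH => exact .rLoad h ihp ihH
  | rStore h _ _ _ ihp ihr => exact .rStore h ihp ihr

/-- **With the most conservative compatibility relation, `Γ_Ty` and `Γ_I`
coincide up to type erasure.**  If every type is compatible with every type,
then for every program `P`, register or abstract object `x`, and allocation
site `H`: `Γ_I ⊢_P x ↦ H` iff there exists a type `T` (and a type tag on `x`
when `x` is an abstract object) such that `Γ_Ty ⊢_P x ↦^T H`, identifying each
typed abstract object `H^T` with its underlying untyped object `H`. -/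
theorem ty_rules_conservative_compat (P : Program) :
    ∀ (x : Node) (H : Obj),
      DerivesI P x H ↔
        ∃ (tx : TNode) (T : Ty),
          tx.erase = x ∧ DerivesTy P (fun _ _ => True) tx T H := by
  intro x H
  constructor
  · intro h
    exact ⟨x.tagChar, .base .char, by cases x <;> rfl, fwd_char h⟩
  · rintro ⟨tx, T, rfl, h⟩
    exact bwd h
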